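/- Let H₁ and H₂ be real Hilbert spaces. For i = 1, 2, let C_i be a nonempty closed convex subset of H_i with metric projection P_{C_i}. Let f_i : H_i → H_i be α_i-strongly monotone with respect to g_i and β_i-Lipschitz continuous, and let g_i : H_i → H_i be δ_i-Lipschitz continuous with g_i − I_i σ_i-strongly monotone (I_i the identity on H_i). Let A : H₁ → H₂ be a bounded linear operator with adjoint A*. Suppose x₁* ∈ H₁ is a solution of the split general variational inequality problem, i.e. g₁(x₁*) ∈ C₁, ⟨f₁(x₁*), x − g₁(x₁*)⟩ ≥ 0 for all x ∈ C₁, and x₂* = Ax₁* satisfies g₂(x₂*) ∈ C₂, ⟨f₂(x₂*), x − g₂(x₂*)⟩ ≥ 0 for all x ∈ C₂. Let {αⁿ} ⊆ (0,1) with Σ_{n=1}^∞ αⁿ = +∞, and let sequences {x₁ⁿ}, {yⁿ}, {zⁿ} be generated from any x₁⁰ ∈ H₁ by: g₁(yⁿ) = P_{C₁}(g₁(x₁ⁿ) − ρ₁ f₁(x₁ⁿ)), g₂(zⁿ) = P_{C₂}(g₂(Ayⁿ) − ρ₂ f₂(Ayⁿ)), x₁^{n+1} = (1 − αⁿ)x₁ⁿ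 + αⁿ[yⁿ + γA*(zⁿ − Ayⁿ)]. If the parameters satisfy: ρ₂ > 0, γ ∈ (0, 2/‖A‖²), θ₂ := √((δ₂² − 2ρ₂α₂ + ρ₂²β₂²)/(2σ₂+1)) > 0, k₁ := √(2σ₁+1)/(1 + 2θ₂), δ₁ > |k₁|, α₁ > β₁√(δ₁² − k₁²), and |ρ₁ − α₁/β₁²| < √(α₁² − β₁²(δ₁² − k₁²))/β₁², then the sequence {x₁ⁿ} converges strongly to x₁*. -/

import Mathlib

open Filter RealInnerProductSpace

/-!
The metric projection is nonexpansive and fixes `g(x*) - ρ f(x*)` at a solution `x*`, and the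
strong monotonicity of `g - I` and of `f` with respect to `g` turn this into the contraction
estimates `‖yⁿ - x*‖ ≤ θ₁ ‖xⁿ - x*‖` and `‖zⁿ - Ax*‖ ≤ θ₂ ‖Ayⁿ - Ax*‖`, with
`θ = √((δ² - 2ρα + ρ²β²) / (2σ + 1))`. Since `γ ‖A‖² ≤ 2`, the correction
`yⁿ + γ A*(zⁿ - Ayⁿ)` is at most `(1 + 2θ₂)` times farther from `x*` than `yⁿ`, so
`‖xⁿ⁺¹ - x*‖ ≤ (1 - (1 - L) αⁿ) ‖xⁿ - x*‖` with `L = (1 + 2θ₂) θ₁`. The conditions on `ρ₁` say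
exactly that `L < 1`, and `∑ αⁿ = ∞` then drives `‖xⁿ - x*‖` to `0`.
-/

section MetricProjection

variable {H : Type*} [NormedAddCommGroup H] [InnerProductSpace ℝ H]

def IsMetricProjection (C : Set H) (P : H → H) : Prop :=
  (∀ z, P z ∈ C) ∧ ∀ z, ∀ y ∈ C, ⟪z - P z, y - P z⟫ ≤ 0

namespace IsMetricProjection

variable {C : Set H} {P : H → H}

lemma eq_of_inner_le (hP : IsMetricProjection C P) {w c : H} (hc : c ∈ C)
    (h : ∀ y ∈ C, ⟪w - c, y - c⟫ ≤ 0) : P w = c := by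
  have h₁ := hP.2 w c hc
  have h₂ := h (P w) (hP.1 w)
  have key : ⟪w - P w, c - P w⟫ + ⟪w - c, P w - c⟫ = ‖c - P w‖ ^ 2 := by
    rw [← real_inner_self_eq_norm_sq]
    simp only [inner_sub_left, inner_sub_right, real_inner_comm]
    ring
  have : ‖c - P w‖ ^ 2 = 0 := le_antisymm (by linarith) (sq_nonneg _)
  rwa [sq_eq_zero_iff, norm_eq_zero, sub_eq_zero, eq_comm] at this

lemma norm_sub_le (hP : IsMetricProjection C P) (u v : H) : ‖P u - P v‖ ≤ ‖u - v‖ := by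
  have h₁ := hP.2 u (P v) (hP.1 v)
  have h₂ := hP.2 v (P u) (hP.1 u)
  have key : ‖P u - P v‖ ^ 2 ≤ ⟪u - v, P u - P v⟫ := by
    rw [← real_inner_self_eq_norm_sq]
    simp only [inner_sub_left, inner_sub_right, real_inner_comm] at h₁ h₂ ⊢
    linarith
  have := key.trans (real_inner_le_norm _ _)
  nlinarith [norm_nonneg (P u - P v), norm_nonneg (u - v)]

lemma apply_sub_smul_eq (hP : IsMetricProjection C P) {c v : H} (hc : c ∈ C)
    (hv : ∀ x ∈ C, 0 ≤ ⟪v, x - c⟫) {ρ : ℝ} (hρ : 0 ≤ ρ) : P (c - ρ • v) = c := by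
  refine hP.eq_of_inner_le hc fun y hy => ?_
  rw [sub_sub_cancel_left, inner_neg_left, real_inner_smul_left, neg_nonpos]
  exact mul_nonneg hρ (hv y hy)

end IsMetricProjection

end MetricProjection

section StronglyMonotone

variable {H : Type*} [NormedAddCommGroup H] [InnerProductSpace ℝ H]

lemma two_mul_add_one_mul_sq_le {g : H → H} {σ : ℝ}
    (hg : ∀ x x' : H, ⟪(g x - x) - (g x' - x'), x - x'⟫ ≥ σ * ‖x - x'‖ ^ 2) (x x' : H) :
    (2 * σ + 1) * ‖x - x'‖ ^ 2 ≤ ‖g x - g x'‖ ^ 2 := by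
  have h := hg x x'
  rw [show (g x - x) - (g x' - x') = (g x - g x') - (x - x') by abel, inner_sub_left,
    real_inner_self_eq_norm_sq] at h
  nlinarith [norm_sub_sq_real (g x - g x') (x - x'), sq_nonneg ‖g x - g x' - (x - x')‖]

lemma norm_sub_sub_smul_sq_le {f g : H → H} {α β δ ρ : ℝ}
    (hf : ∀ x x' : H, ⟪f x - f x', g x - g x'⟫ ≥ α * ‖x - x'‖ ^ 2)
    (hflip : ∀ x x' : H, ‖f x - f x'‖ ≤ β * ‖x - x'‖)
    (hglip : ∀ x x' : H, ‖g x - g x'‖ ≤ δ * ‖x - x'‖) (hρ : 0 ≤ ρ) (x x' : H) :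
    ‖(g x - g x') - ρ • (f x - f x')‖ ^ 2
      ≤ (δ ^ 2 - 2 * ρ * α + ρ ^ 2 * β ^ 2) * ‖x - x'‖ ^ 2 := by
  have hg : ‖g x - g x'‖ ^ 2 ≤ δ ^ 2 * ‖x - x'‖ ^ 2 := by
    rw [← mul_pow]; exact pow_le_pow_left₀ (norm_nonneg _) (hglip x x') 2
  have hf' : ‖f x - f x'‖ ^ 2 ≤ β ^ 2 * ‖x - x'‖ ^ 2 := by
    rw [← mul_pow]; exact pow_le_pow_left₀ (norm_nonneg _) (hflip x x') 2
  rw [norm_sub_sq_real, real_inner_smul_right, norm_smul, real_inner_comm, mul_pow,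
    Real.norm_eq_abs, sq_abs]
  nlinarith [mul_le_mul_of_nonneg_left (hf x x') hρ]

lemma sub_two_mul_add_nonneg [Nontrivial H] {f g : H → H} {α β δ ρ : ℝ}
    (hf : ∀ x x' : H, ⟪f x - f x', g x - g x'⟫ ≥ α * ‖x - x'‖ ^ 2)
    (hflip : ∀ x x' : H, ‖f x - f x'‖ ≤ β * ‖x - x'‖)
    (hglip : ∀ x x' : H, ‖g x - g x'‖ ≤ δ * ‖x - x'‖) (hρ : 0 ≤ ρ) :
    0 ≤ δ ^ 2 - 2 * ρ * α + ρ ^ 2 * β ^ 2 := by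
  obtain ⟨u, v, huv⟩ := exists_pair_ne H
  have hd : 0 < ‖u - v‖ ^ 2 := by positivity [sub_ne_zero.mpr huv]
  exact nonneg_of_mul_nonneg_left ((sq_nonneg _).trans
    (norm_sub_sub_smul_sq_le hf hflip hglip hρ u v)) hd

end StronglyMonotone

lemma le_sqrt_div_mul_of_mul_sq_le {a b c T : ℝ} (hc : 0 < c) (ha : 0 ≤ a) (hb : 0 ≤ b)
    (h : c * a ^ 2 ≤ T * b ^ 2) : a ≤ √(T / c) * b := by
  have hab : a ^ 2 ≤ T / c * b ^ 2 := by
    rw [div_mul_eq_mul_div, le_div_iff₀ hc]; linarith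
  calc a = √(a ^ 2) := (Real.sqrt_sq ha).symm
    _ ≤ √(T / c * b ^ 2) := Real.sqrt_le_sqrt hab
    _ = √(T / c) * b := by rw [Real.sqrt_mul' _ (sq_nonneg b), Real.sqrt_sq hb]

noncomputable def contractionFactor (α β δ σ ρ : ℝ) : ℝ :=
  √((δ ^ 2 - 2 * ρ * α + ρ ^ 2 * β ^ 2) / (2 * σ + 1))

section ProjectionStep

variable {H : Type*} [NormedAddCommGroup H] [InnerProductSpace ℝ H]

lemma norm_sub_le_contractionFactor_mul {C : Set H} {P f g : H → H} {α β δ σ ρ : ℝ}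
    (hP : IsMetricProjection C P)
    (hf : ∀ x x' : H, ⟪f x - f x', g x - g x'⟫ ≥ α * ‖x - x'‖ ^ 2)
    (hflip : ∀ x x' : H, ‖f x - f x'‖ ≤ β * ‖x - x'‖)
    (hglip : ∀ x x' : H, ‖g x - g x'‖ ≤ δ * ‖x - x'‖)
    (hg : ∀ x x' : H, ⟪(g x - x) - (g x' - x'), x - x'⟫ ≥ σ * ‖x - x'‖ ^ 2)
    {xs : H} (hxs : g xs ∈ C) (hsol : ∀ x ∈ C, ⟪f xs, x - g xs⟫ ≥ 0)
    (hρ : 0 ≤ ρ) (hσ : 0 < 2 * σ + 1) {x y : H} (hy : g y = P (g x - ρ • f x)) :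
    ‖y - xs‖ ≤ contractionFactor α β δ σ ρ * ‖x - xs‖ := by
  have hproj : ‖g y - g xs‖ ≤ ‖(g x - g xs) - ρ • (f x - f xs)‖ := by
    have h := hP.norm_sub_le (g x - ρ • f x) (g xs - ρ • f xs)
    rwa [← hy, hP.apply_sub_smul_eq hxs hsol hρ, sub_sub_sub_comm,
      ← smul_sub] at h
  refine le_sqrt_div_mul_of_mul_sq_le hσ (norm_nonneg _) (norm_nonneg _) ?_
  calc (2 * σ + 1) * ‖y - xs‖ ^ 2 ≤ ‖g y - g xs‖ ^ 2 := two_mul_add_one_mul_sq_le hg y xs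
    _ ≤ ‖(g x - g xs) - ρ • (f x - f xs)‖ ^ 2 := pow_le_pow_left₀ (norm_nonneg _) hproj 2
    _ ≤ _ := norm_sub_sub_smul_sq_le hf hflip hglip hρ x xs

lemma two_mul_add_one_pos [Nontrivial H] {f g : H → H} {α β δ σ ρ : ℝ}
    (hf : ∀ x x' : H, ⟪f x - f x', g x - g x'⟫ ≥ α * ‖x - x'‖ ^ 2)
    (hflip : ∀ x x' : H, ‖f x - f x'‖ ≤ β * ‖x - x'‖)
    (hglip : ∀ x x' : H, ‖g x - g x'‖ ≤ δ * ‖x - x'‖) (hρ : 0 ≤ ρ)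
    (hθ : 0 < contractionFactor α β δ σ ρ) : 0 < 2 * σ + 1 := by
  by_contra! hσ
  have := Real.sqrt_eq_zero'.mpr
    (div_nonpos_of_nonneg_of_nonpos (sub_two_mul_add_nonneg hf hflip hglip hρ) hσ)
  exact hθ.ne' this

lemma norm_sub_le_contractionFactor_mul_of_pos {C : Set H} {P f g : H → H} {α β δ σ ρ : ℝ}
    (hP : IsMetricProjection C P)
    (hf : ∀ x x' : H, ⟪f x - f x', g x - g x'⟫ ≥ α * ‖x - x'‖ ^ 2)
    (hflip : ∀ x x' : H, ‖f x - f x'‖ ≤ β * ‖x - x'‖)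
    (hglip : ∀ x x' : H, ‖g x - g x'‖ ≤ δ * ‖x - x'‖)
    (hg : ∀ x x' : H, ⟪(g x - x) - (g x' - x'), x - x'⟫ ≥ σ * ‖x - x'‖ ^ 2)
    {xs : H} (hxs : g xs ∈ C) (hsol : ∀ x ∈ C, ⟪f xs, x - g xs⟫ ≥ 0)
    (hρ : 0 ≤ ρ) (hθ : 0 < contractionFactor α β δ σ ρ) {x y : H}
    (hy : g y = P (g x - ρ • f x)) :
    ‖y - xs‖ ≤ contractionFactor α β δ σ ρ * ‖x - xs‖ := by
  rcases subsingleton_or_nontrivial H with _ | _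
  · rw [Subsingleton.elim y xs, sub_self, norm_zero]
    positivity
  exact norm_sub_le_contractionFactor_mul hP hf hflip hglip hg hxs hsol hρ
    (two_mul_add_one_pos hf hflip hglip hρ hθ) hy

end ProjectionStep

section Adjoint

variable {H₁ H₂ : Type*} [NormedAddCommGroup H₁] [InnerProductSpace ℝ H₁] [CompleteSpace H₁]
  [NormedAddCommGroup H₂] [InnerProductSpace ℝ H₂] [CompleteSpace H₂]
  {A : H₁ →L[ℝ] H₂} {γ : ℝ}

lemma norm_add_smul_adjoint_sq_le (hγ : 0 ≤ γ) (hγA : γ * ‖A‖ ^ 2 ≤ 2) (u : H₁) (w : H₂) :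
    ‖u + γ • ContinuousLinearMap.adjoint A w‖ ^ 2 ≤ ‖u‖ ^ 2 + 2 * γ * ⟪A u + w, w⟫ := by
  have hadj : ‖ContinuousLinearMap.adjoint A w‖ ^ 2 ≤ ‖A‖ ^ 2 * ‖w‖ ^ 2 := by
    rw [← mul_pow]
    refine pow_le_pow_left₀ (norm_nonneg _) ?_ 2
    simpa using (ContinuousLinearMap.adjoint A).le_opNorm w
  have := mul_le_mul_of_nonneg_right hγA (mul_nonneg hγ (sq_nonneg ‖w‖))
  rw [norm_add_sq_real, real_inner_smul_right, ContinuousLinearMap.adjoint_inner_right,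
    norm_smul, mul_pow, Real.norm_eq_abs, sq_abs, inner_add_left, real_inner_self_eq_norm_sq]
  nlinarith [mul_le_mul_of_nonneg_left hadj (sq_nonneg γ)]

lemma norm_add_smul_adjoint_sub_le (hγ : 0 ≤ γ) (hγA : γ * ‖A‖ ^ 2 ≤ 2) {θ : ℝ} (hθ : 0 ≤ θ)
    {y xs : H₁} {z : H₂} (hz : ‖z - A xs‖ ≤ θ * ‖A y - A xs‖) :
    ‖y + γ • ContinuousLinearMap.adjoint A (z - A y) - xs‖ ≤ (1 + 2 * θ) * ‖y - xs‖ := by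
  have hAu : A (y - xs) + (z - A y) = z - A xs := by rw [map_sub]; abel
  rw [← map_sub] at hz
  have hw : ‖z - A y‖ ≤ (1 + θ) * ‖A (y - xs)‖ := by
    calc ‖z - A y‖ = ‖(z - A xs) - A (y - xs)‖ := by rw [← hAu, add_sub_cancel_left]
      _ ≤ ‖z - A xs‖ + ‖A (y - xs)‖ := norm_sub_le _ _
      _ ≤ (1 + θ) * ‖A (y - xs)‖ := by linarith
  have hinner : ⟪A (y - xs) + (z - A y), z - A y⟫ ≤ θ * (1 + θ) * (‖A‖ * ‖y - xs‖) ^ 2 := by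
    calc _ ≤ ‖z - A xs‖ * ‖z - A y‖ := hAu ▸ real_inner_le_norm _ _
      _ ≤ θ * ‖A (y - xs)‖ * ((1 + θ) * ‖A (y - xs)‖) := by gcongr
      _ = θ * (1 + θ) * ‖A (y - xs)‖ ^ 2 := by ring
      _ ≤ θ * (1 + θ) * (‖A‖ * ‖y - xs‖) ^ 2 := by gcongr; exact A.le_opNorm _
  have hsq : ‖(y - xs) + γ • ContinuousLinearMap.adjoint A (z - A y)‖ ^ 2
      ≤ ((1 + 2 * θ) * ‖y - xs‖) ^ 2 := by
    have := mul_le_mul_of_nonneg_right hγA (mul_nonneg (mul_nonneg hθ (by linarith : 0 ≤ 1 + θ))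
      (sq_nonneg ‖y - xs‖))
    nlinarith [norm_add_smul_adjoint_sq_le hγ hγA (y - xs) (z - A y),
      mul_le_mul_of_nonneg_left hinner hγ]
  rw [add_sub_right_comm]
  exact (pow_le_pow_iff_left₀ (norm_nonneg _) (by positivity) two_ne_zero).mp hsq

end Adjoint

lemma norm_convexComb_sub_le {H : Type*} [NormedAddCommGroup H] [NormedSpace ℝ H]
    {a L : ℝ} (ha₀ : 0 ≤ a) (ha₁ : a ≤ 1) {x u p : H} (hu : ‖u - p‖ ≤ L * ‖x - p‖) :
    ‖(1 - a) • x + a • u - p‖ ≤ (1 - (1 - L) * a) * ‖x - p‖ := by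
  calc ‖(1 - a) • x + a • u - p‖ = ‖(1 - a) • (x - p) + a • (u - p)‖ := by congr 1; module
    _ ≤ (1 - a) * ‖x - p‖ + a * ‖u - p‖ := by
        refine (norm_add_le _ _).trans_eq ?_
        rw [norm_smul, norm_smul, Real.norm_of_nonneg (sub_nonneg.mpr ha₁),
          Real.norm_of_nonneg ha₀]
    _ ≤ (1 - (1 - L) * a) * ‖x - p‖ := by nlinarith [mul_le_mul_of_nonneg_left hu ha₀]

lemma tendsto_zero_of_le_one_sub_mul {d a : ℕ → ℝ} {c : ℝ} (hc : 0 < c) (hd : ∀ n, 0 ≤ d n)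
    (ha : ∀ n, 0 ≤ a n) (hdiv : ¬ Summable a) (hrec : ∀ n, d (n + 1) ≤ (1 - c * a n) * d n) :
    Tendsto d atTop (nhds 0) := by
  have hbound : ∀ n, d n ≤ d 0 * Real.exp (-(c * ∑ k ∈ Finset.range n, a k)) := by
    intro n
    induction n with
    | zero => simp
    | succ n ih =>
      calc d (n + 1) ≤ (1 - c * a n) * d n := hrec n
        _ ≤ Real.exp (-(c * a n)) * (d 0 * Real.exp (-(c * ∑ k ∈ Finset.range n, a k))) := by
          gcongr
          · exact hd n
          · linarith [Real.add_one_le_exp (-(c * a n))]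
        _ = d 0 * Real.exp (-(c * ∑ k ∈ Finset.range (n + 1), a k)) := by
          rw [Finset.sum_range_succ, mul_left_comm, ← Real.exp_add]
          ring_nf
  have hsum : Tendsto (fun n => c * ∑ k ∈ Finset.range n, a k) atTop atTop :=
    ((not_summable_iff_tendsto_nat_atTop_of_nonneg ha).mp hdiv).const_mul_atTop hc
  have hexp := (Real.tendsto_exp_atBot.comp (tendsto_neg_atTop_atBot.comp hsum)).const_mul (d 0)
  rw [mul_zero] at hexp
  exact squeeze_zero hd hbound hexp

lemma pos_and_abs_mul_sub_lt_of_abs_sub_div_lt {α b s ρ : ℝ} (hb : 0 ≤ b)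
    (h : |ρ - α / b| < s / b) : 0 < b ∧ |ρ * b - α| < s := by
  rcases hb.eq_or_lt with rfl | hb
  · rw [div_zero, div_zero] at h; exact absurd h (abs_nonneg _).not_gt
  refine ⟨hb, ?_⟩
  calc |ρ * b - α| = |ρ - α / b| * b := by
        rw [show ρ * b - α = (ρ - α / b) * b by field_simp, abs_mul, abs_of_pos hb]
    _ < s := (lt_div_iff₀ hb).mp h

lemma pos_and_sq_lt_of_abs_sub_div_lt {α β δ k ρ : ℝ}
    (h : |ρ - α / β ^ 2| < √(α ^ 2 - β ^ 2 * (δ ^ 2 - k ^ 2)) / β ^ 2) :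
    0 < β ^ 2 ∧ (ρ * β ^ 2 - α) ^ 2 < α ^ 2 - β ^ 2 * (δ ^ 2 - k ^ 2) := by
  obtain ⟨hβ, habs⟩ := pos_and_abs_mul_sub_lt_of_abs_sub_div_lt (sq_nonneg β) h
  have hD : 0 < α ^ 2 - β ^ 2 * (δ ^ 2 - k ^ 2) :=
    Real.sqrt_pos.mp ((abs_nonneg _).trans_lt habs)
  refine ⟨hβ, ?_⟩
  rw [← sq_abs, ← Real.sq_sqrt hD.le]
  exact pow_lt_pow_left₀ habs (abs_nonneg _) two_ne_zero

lemma sub_two_mul_add_lt_sq_of_abs_sub_div_lt {α β δ k ρ : ℝ}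
    (h : |ρ - α / β ^ 2| < √(α ^ 2 - β ^ 2 * (δ ^ 2 - k ^ 2)) / β ^ 2) :
    δ ^ 2 - 2 * ρ * α + ρ ^ 2 * β ^ 2 < k ^ 2 := by
  obtain ⟨hβ, hsq⟩ := pos_and_sq_lt_of_abs_sub_div_lt h
  nlinarith

lemma pos_of_abs_sub_div_lt {α β δ k ρ : ℝ} (hδ : |k| < δ) (hα : β * √(δ ^ 2 - k ^ 2) < α)
    (h : |ρ - α / β ^ 2| < √(α ^ 2 - β ^ 2 * (δ ^ 2 - k ^ 2)) / β ^ 2) : 0 < ρ := by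
  obtain ⟨hβ, hsq⟩ := pos_and_sq_lt_of_abs_sub_div_lt h
  have hk : 0 < δ ^ 2 - k ^ 2 := by
    rw [sub_pos, ← sq_abs k]; exact pow_lt_pow_left₀ hδ (abs_nonneg k) two_ne_zero
  have hs := Real.sq_sqrt hk.le
  have hα : 0 < α := by nlinarith [Real.sqrt_nonneg (δ ^ 2 - k ^ 2)]
  by_contra! hρ
  have hρβ : ρ * β ^ 2 ≤ 0 := mul_nonpos_of_nonpos_of_nonneg hρ hβ.le
  nlinarith [mul_pos hβ hk,
    mul_nonneg_of_nonpos_of_nonpos hρβ (by linarith : ρ * β ^ 2 - 2 * α ≤ 0)]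

lemma mul_sqrt_div_lt_one {T s q : ℝ} (hs : 0 < s) (hq : 0 < q) (h : T < (√s / q) ^ 2) :
    q * √(T / s) < 1 := by
  rw [div_pow, Real.sq_sqrt hs.le, lt_div_iff₀ (by positivity)] at h
  rw [← lt_div_iff₀' hq, Real.sqrt_lt' (by positivity), div_lt_iff₀ hs]
  field_simp
  linarith

lemma mul_lt_of_mem_Ioo_zero_div {γ b c : ℝ} (hb : 0 ≤ b) (hγ : γ ∈ Set.Ioo 0 (c / b)) :
    γ * b < c := by
  rcases hb.eq_or_lt with rfl | hb
  · rw [div_zero] at hγ; exact absurd hγ.1 hγ.2.not_gt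
  · exact (lt_div_iff₀ hb).mp hγ.2

theorem stmt_2_general
    {H₁ H₂ : Type*}
    [NormedAddCommGroup H₁] [InnerProductSpace ℝ H₁] [CompleteSpace H₁]
    [NormedAddCommGroup H₂] [InnerProductSpace ℝ H₂] [CompleteSpace H₂]
    -- fixed nonempty closed convex sets and their metric projections
    (C₁ : Set H₁) (C₂ : Set H₂)
    (P₁ : H₁ → H₁) (P₂ : H₂ → H₂)
    (hP₁mem : ∀ z, P₁ z ∈ C₁)
    (hP₁char : ∀ z, ∀ y ∈ C₁, ⟪z - P₁ z, y - P₁ z⟫ ≤ 0)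
    (hP₂mem : ∀ z, P₂ z ∈ C₂)
    (hP₂char : ∀ z, ∀ y ∈ C₂, ⟪z - P₂ z, y - P₂ z⟫ ≤ 0)
    -- the mappings and their properties
    (f₁ g₁ : H₁ → H₁) (f₂ g₂ : H₂ → H₂)
    (α₁ α₂ β₁ β₂ δ₁ δ₂ σ₁ σ₂ : ℝ)
    (hf₁sm : ∀ x x' : H₁, ⟪f₁ x - f₁ x', g₁ x - g₁ x'⟫ ≥ α₁ * ‖x - x'‖ ^ 2)
    (hf₁lip : ∀ x x' : H₁, ‖f₁ x - f₁ x'‖ ≤ β₁ * ‖x - x'‖)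
    (hg₁lip : ∀ x x' : H₁, ‖g₁ x - g₁ x'‖ ≤ δ₁ * ‖x - x'‖)
    (hg₁sm : ∀ x x' : H₁, ⟪(g₁ x - x) - (g₁ x' - x'), x - x'⟫ ≥ σ₁ * ‖x - x'‖ ^ 2)
    (hf₂sm : ∀ x x' : H₂, ⟪f₂ x - f₂ x', g₂ x - g₂ x'⟫ ≥ α₂ * ‖x - x'‖ ^ 2)
    (hf₂lip : ∀ x x' : H₂, ‖f₂ x - f₂ x'‖ ≤ β₂ * ‖x - x'‖)
    (hg₂lip : ∀ x x' : H₂, ‖g₂ x - g₂ x'‖ ≤ δ₂ * ‖x - x'‖)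
    (hg₂sm : ∀ x x' : H₂, ⟪(g₂ x - x) - (g₂ x' - x'), x - x'⟫ ≥ σ₂ * ‖x - x'‖ ^ 2)
    (A : H₁ →L[ℝ] H₂)
    -- x₁* solves the SpGVIP
    (xs : H₁)
    (hsol₁mem : g₁ xs ∈ C₁)
    (hsol₁ : ∀ x ∈ C₁, ⟪f₁ xs, x - g₁ xs⟫ ≥ 0)
    (hsol₂mem : g₂ (A xs) ∈ C₂)
    (hsol₂ : ∀ x ∈ C₂, ⟪f₂ (A xs), x - g₂ (A xs)⟫ ≥ 0)
    -- the iterative algorithm 2.3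
    (a : ℕ → ℝ) (ha : ∀ n, a n ∈ Set.Ioo (0 : ℝ) 1) (hadiv : ¬ Summable a)
    (ρ₁ ρ₂ γ : ℝ)
    (x₁ y : ℕ → H₁) (z : ℕ → H₂)
    (halg₁ : ∀ n, g₁ (y n) = P₁ (g₁ (x₁ n) - ρ₁ • f₁ (x₁ n)))
    (halg₂ : ∀ n, g₂ (z n) = P₂ (g₂ (A (y n)) - ρ₂ • f₂ (A (y n))))
    (halg₃ : ∀ n, x₁ (n + 1) = (1 - a n) • x₁ n
        + a n • (y n + γ • (ContinuousLinearMap.adjoint A) (z n - A (y n))))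
    -- conditions on the parameters
    (θ₂ k₁ : ℝ)
    (hθ₂def : θ₂ = Real.sqrt ((δ₂ ^ 2 - 2 * ρ₂ * α₂ + ρ₂ ^ 2 * β₂ ^ 2) / (2 * σ₂ + 1)))
    (hk₁def : k₁ = Real.sqrt (2 * σ₁ + 1) / (1 + 2 * θ₂))
    (hρ₂ : 0 < ρ₂)
    (hγ : γ ∈ Set.Ioo (0 : ℝ) (2 / ‖A‖ ^ 2))
    (hθ₂pos : 0 < θ₂)
    (hδ₁ : δ₁ > |k₁|)
    (hα₁ : α₁ > β₁ * Real.sqrt (δ₁ ^ 2 - k₁ ^ 2))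
    (hρ₁ : |ρ₁ - α₁ / β₁ ^ 2|
        < Real.sqrt (α₁ ^ 2 - β₁ ^ 2 * (δ₁ ^ 2 - k₁ ^ 2)) / β₁ ^ 2) :
    Tendsto x₁ atTop (nhds xs) := by
  rcases subsingleton_or_nontrivial H₁ with _ | _
  · simp [Subsingleton.elim _ xs]
  have hρ₁pos : 0 < ρ₁ := pos_of_abs_sub_div_lt hδ₁ hα₁ hρ₁
  have hT₁ := sub_two_mul_add_lt_sq_of_abs_sub_div_lt hρ₁
  have hσ₁ : 0 < 2 * σ₁ + 1 := by
    -- otherwise `k₁ = √(2 * σ₁ + 1) / _ = 0`, which `hT₁` forbids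
    by_contra! h
    rw [hk₁def, Real.sqrt_eq_zero'.mpr h, zero_div] at hT₁
    linarith [sub_two_mul_add_nonneg hf₁sm hf₁lip hg₁lip hρ₁pos.le]
  have hL : (1 + 2 * θ₂) * contractionFactor α₁ β₁ δ₁ σ₁ ρ₁ < 1 :=
    mul_sqrt_div_lt_one hσ₁ (by positivity) (hk₁def ▸ hT₁)
  have hy n := norm_sub_le_contractionFactor_mul ⟨hP₁mem, hP₁char⟩ hf₁sm hf₁lip hg₁lip hg₁sm
    hsol₁mem hsol₁ hρ₁pos.le hσ₁ (halg₁ n)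
  have hθ₂ : θ₂ = contractionFactor α₂ β₂ δ₂ σ₂ ρ₂ := hθ₂def
  have hz n : ‖z n - A xs‖ ≤ θ₂ * ‖A (y n) - A xs‖ := by
    rw [hθ₂]
    exact norm_sub_le_contractionFactor_mul_of_pos ⟨hP₂mem, hP₂char⟩ hf₂sm hf₂lip hg₂lip hg₂sm
      hsol₂mem hsol₂ hρ₂.le (hθ₂ ▸ hθ₂pos) (halg₂ n)
  have hγA : γ * ‖A‖ ^ 2 ≤ 2 := (mul_lt_of_mem_Ioo_zero_div (sq_nonneg _) hγ).le
  refine tendsto_iff_norm_sub_tendsto_zero.mpr <| tendsto_zero_of_le_one_sub_mul (sub_pos.mpr hL)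
    (fun n => norm_nonneg _) (fun n => (ha n).1.le) hadiv fun n => ?_
  rw [halg₃]
  exact norm_convexComb_sub_le (ha n).1.le (ha n).2.le <|
    (norm_add_smul_adjoint_sub_le hγ.1.le hγA hθ₂pos.le (hz n)).trans
      (mul_le_mul_of_nonneg_left (hy n) (by positivity)) |>.trans_eq (mul_assoc _ _ _).symm

/-- Convergence of the projection iterative algorithm for the split general
variational inequality problem (Corollary 3.2). -/
theorem stmt_2
    {H₁ H₂ : Type*}
    [NormedAddCommGroup H₁] [InnerProductSpace ℝ H₁] [CompleteSpace H₁]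
    [NormedAddCommGroup H₂] [InnerProductSpace ℝ H₂] [CompleteSpace H₂]
    -- fixed nonempty closed convex sets and their metric projections
    (C₁ : Set H₁) (C₂ : Set H₂)
    (hC₁ : C₁.Nonempty ∧ IsClosed C₁ ∧ Convex ℝ C₁)
    (hC₂ : C₂.Nonempty ∧ IsClosed C₂ ∧ Convex ℝ C₂)
    (P₁ : H₁ → H₁) (P₂ : H₂ → H₂)
    (hP₁mem : ∀ z, P₁ z ∈ C₁)
    (hP₁char : ∀ z, ∀ y ∈ C₁, ⟪z - P₁ z, y - P₁ z⟫ ≤ 0)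
    (hP₂mem : ∀ z, P₂ z ∈ C₂)
    (hP₂char : ∀ z, ∀ y ∈ C₂, ⟪z - P₂ z, y - P₂ z⟫ ≤ 0)
    -- the mappings and their properties
    (f₁ g₁ : H₁ → H₁) (f₂ g₂ : H₂ → H₂)
    (α₁ α₂ β₁ β₂ δ₁ δ₂ σ₁ σ₂ : ℝ)
    (hf₁sm : ∀ x x' : H₁, ⟪f₁ x - f₁ x', g₁ x - g₁ x'⟫ ≥ α₁ * ‖x - x'‖ ^ 2)
    (hf₁lip : ∀ x x' : H₁, ‖f₁ x - f₁ x'‖ ≤ β₁ * ‖x - x'‖)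
    (hg₁lip : ∀ x x' : H₁, ‖g₁ x - g₁ x'‖ ≤ δ₁ * ‖x - x'‖)
    (hg₁sm : ∀ x x' : H₁, ⟪(g₁ x - x) - (g₁ x' - x'), x - x'⟫ ≥ σ₁ * ‖x - x'‖ ^ 2)
    (hf₂sm : ∀ x x' : H₂, ⟪f₂ x - f₂ x', g₂ x - g₂ x'⟫ ≥ α₂ * ‖x - x'‖ ^ 2)
    (hf₂lip : ∀ x x' : H₂, ‖f₂ x - f₂ x'‖ ≤ β₂ * ‖x - x'‖)
    (hg₂lip : ∀ x x' : H₂, ‖g₂ x - g₂ x'‖ ≤ δ₂ * ‖x - x'‖)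
    (hg₂sm : ∀ x x' : H₂, ⟪(g₂ x - x) - (g₂ x' - x'), x - x'⟫ ≥ σ₂ * ‖x - x'‖ ^ 2)
    (A : H₁ →L[ℝ] H₂)
    -- x₁* solves the SpGVIP
    (xs : H₁)
    (hsol₁mem : g₁ xs ∈ C₁)
    (hsol₁ : ∀ x ∈ C₁, ⟪f₁ xs, x - g₁ xs⟫ ≥ 0)
    (hsol₂mem : g₂ (A xs) ∈ C₂)
    (hsol₂ : ∀ x ∈ C₂, ⟪f₂ (A xs), x - g₂ (A xs)⟫ ≥ 0)
    -- the iterative algorithm 2.3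
    (a : ℕ → ℝ) (ha : ∀ n, a n ∈ Set.Ioo (0 : ℝ) 1) (hadiv : ¬ Summable a)
    (ρ₁ ρ₂ γ : ℝ)
    (x₁ y : ℕ → H₁) (z : ℕ → H₂)
    (halg₁ : ∀ n, g₁ (y n) = P₁ (g₁ (x₁ n) - ρ₁ • f₁ (x₁ n)))
    (halg₂ : ∀ n, g₂ (z n) = P₂ (g₂ (A (y n)) - ρ₂ • f₂ (A (y n))))
    (halg₃ : ∀ n, x₁ (n + 1) = (1 - a n) • x₁ n
        + a n • (y n + γ • (ContinuousLinearMap.adjoint A) (z n - A (y n))))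
    -- conditions on the parameters
    (θ₂ k₁ : ℝ)
    (hθ₂def : θ₂ = Real.sqrt ((δ₂ ^ 2 - 2 * ρ₂ * α₂ + ρ₂ ^ 2 * β₂ ^ 2) / (2 * σ₂ + 1)))
    (hk₁def : k₁ = Real.sqrt (2 * σ₁ + 1) / (1 + 2 * θ₂))
    (hρ₂ : 0 < ρ₂)
    (hγ : γ ∈ Set.Ioo (0 : ℝ) (2 / ‖A‖ ^ 2))
    (hθ₂pos : 0 < θ₂)
    (hδ₁ : δ₁ > |k₁|)
    (hα₁ : α₁ > β₁ * Real.sqrt (δ₁ ^ 2 - k₁ ^ 2))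
    (hρ₁ : |ρ₁ - α₁ / β₁ ^ 2|
        < Real.sqrt (α₁ ^ 2 - β₁ ^ 2 * (δ₁ ^ 2 - k₁ ^ 2)) / β₁ ^ 2) :
    Tendsto x₁ atTop (nhds xs) :=
  stmt_2_general C₁ C₂ P₁ P₂ hP₁mem hP₁char hP₂mem hP₂char f₁ g₁ f₂ g₂ α₁ α₂ β₁ β₂ δ₁ δ₂ σ₁ σ₂ hf₁sm
    hf₁lip hg₁lip hg₁sm hf₂sm hf₂lip hg₂lip hg₂sm A xs hsol₁mem hsol₁ hsol₂mem hsol₂ a ha hadiv ρ₁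
    ρ₂ γ x₁ y z halg₁ halg₂ halg₃ θ₂ k₁ hθ₂def hk₁def hρ₂ hγ hθ₂pos hδ₁ hα₁ hρ₁
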